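/- In the full Gray code of words of length n, every run (maximal block of consecutive words sharing the same first n−1 letters) contains at least one arc-disconnected word and at least two arc-connected words. -/

import Mathlib

/-- The full Gray code of words: for `n = 0` the single empty word; words of
the length-`n` code at even (0-indexed, i.e. odd 1-indexed) positions are
extended by last letters `1, 2, …, 2(n+1)-1` in increasing order, those at odd
(0-indexed) positions by the same last letters in decreasing order. -/
def grayCode : ℕ → List (List ℕ)
  | 0 => [[]]
  | n+1 =>
      ((grayCode n).zipIdx.map Prod.swap |>.map (fun p =>
        if p.1 % 2 = 0 then
          (List.range (2*n + 1)).map (fun j => p.2 ++ [j + 1])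
        else
          ((List.range (2*n + 1)).map (fun j => p.2 ++ [j + 1])).reverse)).flatten

/-- The 1-indexed `i`-th letter of a word. -/
def wd (a : List ℕ) (i : ℕ) : ℕ := a.getD (i - 1) 0

/-- A word `a₁…aₙ` is arc-disconnected if there is a `k ≥ 2` with
`a_k = 2k-1` and `a_j ≥ 2k-1` for all `j > k`. -/
def ArcDiscL (a : List ℕ) : Prop :=
  ∃ k, 2 ≤ k ∧ k ≤ a.length ∧ wd a k = 2*k - 1 ∧
    ∀ j, k < j → j ≤ a.length → 2*k - 1 ≤ wd a j

/-! Membership in a run does not depend on its direction, so every run of the Gray code of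
length `n` consists of a fixed prefix `p` followed by each of the last letters `1, …, 2n-1`.
Taking the last letter `2n-1` gives an arc-disconnected word (witness `k = n`), and the last
letters `1` and `2` give two arc-connected words, since any witness `k ≥ 2` would force the
last letter to be at least `2k-1 ≥ 3`. -/

theorem List.mem_ite_reverse {α : Type*} {a : α} (c : Prop) [Decidable c] (l : List α) :
    a ∈ (if c then l else l.reverse) ↔ a ∈ l := by
  split_ifs <;> simp

theorem mem_grayCode_succ {n : ℕ} {a : List ℕ} :
    a ∈ grayCode (n + 1) ↔ ∃ p ∈ grayCode n, ∃ j < 2 * n + 1, a = p ++ [j + 1] := by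
  simp [grayCode, List.mem_ite_reverse, List.exists_mem_iff_getElem, eq_comm]

theorem append_singleton_mem_grayCode_succ {n x : ℕ} {p : List ℕ} (hp : p ∈ grayCode n)
    (hx₁ : 1 ≤ x) (hx₂ : x ≤ 2 * n + 1) : p ++ [x] ∈ grayCode (n + 1) :=
  mem_grayCode_succ.mpr ⟨p, hp, x - 1, by omega, by rw [Nat.sub_add_cancel hx₁]⟩

theorem length_of_mem_grayCode {n : ℕ} {a : List ℕ} (h : a ∈ grayCode n) : a.length = n := by
  induction n generalizing a with
  | zero => simp_all [grayCode]
  | succ n ih =>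
    obtain ⟨p, hp, j, -, rfl⟩ := mem_grayCode_succ.mp h
    simp [ih hp]

theorem wd_append_singleton_length (p : List ℕ) (x : ℕ) : wd (p ++ [x]) (p.length + 1) = x := by
  simp [wd]

theorem arcDiscL_append_singleton {p : List ℕ} (hp : 1 ≤ p.length) :
    ArcDiscL (p ++ [2 * (p.length + 1) - 1]) :=
  ⟨p.length + 1, by omega, by simp, wd_append_singleton_length _ _,
    fun j hj hj' => by simp at hj'; omega⟩

theorem not_arcDiscL_append_singleton {p : List ℕ} {x : ℕ} (hx : x ≤ 2) :
    ¬ ArcDiscL (p ++ [x]) := by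
  rintro ⟨k, hk, hkl, hwk, hge⟩
  rw [List.length_append, List.length_singleton] at hkl hge
  rcases hkl.lt_or_eq with hlt | rfl
  · have := hge (p.length + 1) hlt le_rfl
    rw [wd_append_singleton_length] at this
    omega
  · rw [wd_append_singleton_length] at hwk
    omega

/-- Every run of the full Gray code (all words sharing the same
first `n-1` letters) contains at least one arc-disconnected word and at least
two arc-connected words. -/
theorem stmt_15 (n : ℕ) (hn : 2 ≤ n) (a : List ℕ) (ha : a ∈ grayCode n) :
    (∃ b ∈ grayCode n, b.take (n-1) = a.take (n-1) ∧ ArcDiscL b) ∧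
    (∃ b ∈ grayCode n, ∃ c ∈ grayCode n, b ≠ c ∧
      b.take (n-1) = a.take (n-1) ∧ c.take (n-1) = a.take (n-1) ∧
      ¬ ArcDiscL b ∧ ¬ ArcDiscL c) := by
  obtain ⟨m, rfl⟩ : ∃ m, n = m + 1 := ⟨n - 1, by omega⟩
  obtain ⟨p, hp, j, -, rfl⟩ := mem_grayCode_succ.mp ha
  obtain rfl : p.length = m := length_of_mem_grayCode hp
  have htake (x : ℕ) : (p ++ [x]).take (p.length + 1 - 1) = p := by simp
  refine ⟨⟨p ++ [2 * (p.length + 1) - 1],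
      append_singleton_mem_grayCode_succ hp (by omega) (by omega),
      by rw [htake, htake], arcDiscL_append_singleton (by omega)⟩,
    ⟨p ++ [1], append_singleton_mem_grayCode_succ hp le_rfl (by omega),
      p ++ [2], append_singleton_mem_grayCode_succ hp (by omega) (by omega), by simp,
      by rw [htake, htake], by rw [htake, htake],
      not_arcDiscL_append_singleton (by omega), not_arcDiscL_append_singleton le_rfl⟩⟩
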